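/- Let X be an n × n upper triangular matrix with nonnegative integer entries on and above the main diagonal (−∞ below), satisfying: (A) ∑_{i=1}^n X_{i,i} ≥ ∑_{i=1}^{n−1} X_{i,i+1}; (B) X_{i,j+1} ≥ X_{i,j} for 1 ≤ i ≤ j < n; (C) X_{i−1,j} ≥ X_{i,j} for 1 < i ≤ j ≤ n; (D) X_{i,j} + X_{i+1,j+1} ≥ X_{i,j+1} + X_{i+1,j} for 1 ≤ i < j < n. Then X = ρ(T) for some semistandard tableau T over {1,...,n}, where ρ(T)_{p,q} is the maximum length of a non-decreasing scattered subword of the word of T using only letters in {p,...,q}. -/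

import Mathlib

/-- The `i`-th smallest element (0-indexed) of a finite set of naturals
(`0` if `i` is out of range). -/
def nthEl (S : Finset ℕ) (i : ℕ) : ℕ := (S.sort (· ≤ ·)).getD i 0

/-- The order on subsets of equal cardinality: `S ≤ T` iff `|S| = |T|` and the `i`-th
smallest element of `S` is at most that of `T`, for all `i`. -/
def FLE (S T : Finset ℕ) : Prop :=
  S.card = T.card ∧ ∀ i < T.card, nthEl S i ≤ nthEl T i

/-- The general order: `S ≤ T` iff `|S| ≥ |T|` and the `i`-th smallest element of `S`
is at most that of `T` for all `i < |T|`. -/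
def GLE (S T : Finset ℕ) : Prop :=
  T.card ≤ S.card ∧ ∀ i < T.card, nthEl S i ≤ nthEl T i

/-- A word `w` over `{1,…,n}` is readable from `P` to `Q` if there is a chain
`P ≤ S₁ ≤ … ≤ S_{|w|} ≤ Q` of subsets of `{1,…,n}` with `wᵢ ∈ Sᵢ` for each `i`. -/
def Readable (n : ℕ) (w : List ℕ) (P Q : Finset ℕ) : Prop :=
  ∃ L : List (Finset ℕ), L.length = w.length ∧ (∀ A ∈ L, A ⊆ Finset.Icc 1 n) ∧
    List.Chain' FLE (P :: (L ++ [Q])) ∧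
    ∀ i (h : i < w.length), w.get ⟨i, h⟩ ∈ L.getD i ∅

/-- Tropical (max-plus) product of matrices indexed by subsets of `{1,…,n}`. -/
noncomputable def tmul (n : ℕ) (A B : Finset ℕ → Finset ℕ → WithBot ℝ) :
    Finset ℕ → Finset ℕ → WithBot ℝ :=
  fun P Q => ((Finset.Icc 1 n).powerset).sup fun R => A P R + B R Q

open Classical in
/-- The image of a generator `x ∈ {1,…,n}` under `ρₙ`. -/
noncomputable def rhoGen (n : ℕ) (x : ℕ) (P Q : Finset ℕ) : WithBot ℝ :=
  if FLE P Q then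
    (if ∃ S : Finset ℕ, S ⊆ Finset.Icc 1 n ∧ FLE P S ∧ FLE S Q ∧ x ∈ S then 1 else 0)
  else ⊥

open Classical in
/-- The image of a word under `ρₙ`, extended multiplicatively (the empty word maps to the
matrix with `0` in positions `(P,Q)` with `P ≤ Q` and `-∞` elsewhere). -/
noncomputable def rhoW (n : ℕ) : List ℕ → Finset ℕ → Finset ℕ → WithBot ℝ
  | [] => fun P Q => if FLE P Q then 0 else ⊥
  | x :: w => tmul n (rhoGen n x) (rhoW n w)

/-- The Knuth relations over `{1,…,n}`. -/
inductive KnuthRel (n : ℕ) : List ℕ → List ℕ → Prop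
  | k1 (a b c : ℕ) (h1 : 1 ≤ a) (h2 : a < b) (h3 : b ≤ c) (h4 : c ≤ n) :
      KnuthRel n [b, c, a] [b, a, c]
  | k2 (a b c : ℕ) (h1 : 1 ≤ a) (h2 : a ≤ b) (h3 : b < c) (h4 : c ≤ n) :
      KnuthRel n [c, a, b] [a, c, b]

/-- The plactic congruence on words: the equivalence generated by applying Knuth
relations inside words. Two words are related iff they represent the same element of
the plactic monoid of rank `n`. -/
def PlacticRel (n : ℕ) : List ℕ → List ℕ → Prop :=
  Relation.EqvGen fun w v => ∃ p s x y, KnuthRel n x y ∧ w = p ++ x ++ s ∧ v = p ++ y ++ s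

/-- A semistandard Young tableau over `{1,…,n}`, given by its list of rows
(row 0 is the bottom row): entries lie in `{1,…,n}`, rows weakly increase left to right,
row lengths weakly decrease going up, columns strictly increase going up
(i.e. strictly decrease reading down). -/
structure Tableau (n : ℕ) where
  rows : List (List ℕ)
  entries_mem : ∀ r ∈ rows, ∀ x ∈ r, x ∈ Finset.Icc 1 n
  row_weak : ∀ r ∈ rows, List.Pairwise (· ≤ ·) r
  shape : ∀ i, (rows.getD (i + 1) []).length ≤ (rows.getD i []).length
  col_strict : ∀ i j, j < (rows.getD (i + 1) []).length →
    (rows.getD i []).getD j 0 < (rows.getD (i + 1) []).getD j 0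

/-- The number of occurrences of the symbol `y` in row `x` (rows numbered from 1, from
the bottom) of the tableau `T`. -/
def rowCount {n : ℕ} (T : Tableau n) (x y : ℕ) : ℕ := (T.rows.getD (x - 1) []).count y

/-- The row reading of a tableau: rows read left to right, from top row to bottom row. -/
def rowReading {n : ℕ} (T : Tableau n) : List ℕ := T.rows.reverse.flatten

/-- The `j`-th column of a tableau, read from top to bottom. -/
def colOf {n : ℕ} (T : Tableau n) (j : ℕ) : List ℕ :=
  ((List.range T.rows.length).reverse).filterMap fun i => (T.rows.getD i [])[j]?

/-- The column reading of a tableau: columns read top to bottom, left to right. -/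
def colReading {n : ℕ} (T : Tableau n) : List ℕ :=
  ((List.range ((T.rows.getD 0 []).length)).map (colOf T)).flatten

/-- The `(k,m)`-completion of `S ⊆ {1,…,m}`: adjoin to `S` the `k - |S|` largest
elements of `{1,…,m} \ S`. -/
def completion (k m : ℕ) (S : Finset ℕ) : Finset ℕ :=
  S ∪ ((((Finset.Icc 1 m) \ S).sort (· ≤ ·)).reverse.take (k - S.card)).toFinset

/-- Tropical (max-plus) product of `n × n` matrices over `ℝ ∪ {-∞}`. -/
noncomputable def tmulF (n : ℕ) (A B : Fin n → Fin n → WithBot ℝ) :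
    Fin n → Fin n → WithBot ℝ :=
  fun i j => Finset.univ.sup fun k => A i k + B k j

/-- The tropical identity matrix. -/
noncomputable def tIdF (n : ℕ) : Fin n → Fin n → WithBot ℝ :=
  fun i j => if i = j then (0 : WithBot ℝ) else ⊥

/-!
The tableau is forced: if the longest nondecreasing subword with letters in `[p, q]` is made of
the letters in `[p, q]` of row `p` followed by all letters `q` of the rows below (the greedy
subword `phi`), then the multiplicity of each letter in each row can be solved for from `X`.
Conditions (B) and (D) make these multiplicities grow along diagonals and (A), (C) make the
diagonal ones nonnegative, so they are natural numbers; (C) then makes consecutive rows interlace,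
which gives strictly increasing columns. Conversely, a nondecreasing subword of the rows
`R, R - 1, …, 1` with letters in `[a, q]` takes its letters in some `[a, b]` from row `R` and the
rest, in `[b, q]`, from the rows below; by induction on `R` it is no longer than the greedy one,
the inductive step being (D) summed along a diagonal.
-/

open Finset

lemma List.getElem_lt_getElem_of_countP_le {α : Type*} [LinearOrder α] {L M : List α}
    (hL : L.Pairwise (· ≤ ·)) (hM : M.Pairwise (· ≤ ·))
    (h : ∀ b, M.countP (· ≤ b) ≤ L.countP (· < b)) {j : ℕ} (hj : j < M.length) :
    ∃ hjL : j < L.length, L[j] < M[j] := by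
  obtain ⟨b, hb⟩ : ∃ b, M[j] = b := ⟨_, rfl⟩
  have hM_split : M = M.take j ++ b :: M.drop (j + 1) := by
    rw [← hb, ← List.drop_eq_getElem_cons, List.take_append_drop]
  have hM_count : j + 1 ≤ M.countP (· ≤ b) := by
    have hle : ∀ x ∈ M.take j, x ≤ b := fun x hx =>
      List.pairwise_append.mp (hM_split ▸ hM) |>.2.2 x hx b List.mem_cons_self
    rw [hM_split, List.countP_append, List.countP_eq_length.mpr (by simpa using hle),
      List.length_take_of_le hj.le, List.countP_cons_of_pos (by simp)]
    omega
  have hL_count := hM_count.trans (h b)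
  have hjL : j < L.length := by have := L.countP_le_length (p := (· < b)); omega
  refine ⟨hjL, hb ▸ lt_of_not_ge fun hge => ?_⟩
  have hL_split : L = L.take j ++ L[j] :: L.drop (j + 1) := by
    rw [← List.drop_eq_getElem_cons, List.take_append_drop]
  have hge' : ∀ y ∈ L[j] :: L.drop (j + 1), b ≤ y := by
    have := (hL_split ▸ hL).sublist (List.sublist_append_right _ _)
    intro y hy
    rcases List.mem_cons.mp hy with rfl | hy
    · exact hge
    · exact hge.trans (List.pairwise_cons.mp this |>.1 y hy)
  rw [hL_split, List.countP_append, List.countP_eq_zero (l := _ :: _).mpr (by simpa using hge'),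
    add_zero] at hL_count
  have := (L.take j).countP_le_length (p := (· < b))
  rw [List.length_take_of_le hjL.le] at this
  omega

namespace RhoTableau

section Rows

variable (m : ℕ → ℕ → ℕ) (n : ℕ)

def row (r : ℕ) : List ℕ :=
  (List.range' r (n + 1 - r)).flatMap fun v => List.replicate (m r v) v

def reading : ℕ → List ℕ
  | 0 => []
  | R + 1 => row m n (R + 1) ++ reading R

variable {m n} in
lemma mem_row {r x : ℕ} (hx : x ∈ row m n r) : r ≤ x ∧ x ≤ n := by
  simp only [row, List.mem_flatMap, List.mem_range'_1, List.mem_replicate] at hx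
  obtain ⟨v, hv, -, rfl⟩ := hx
  omega

lemma row_eq_nil {r : ℕ} (hr : n < r) : row m n r = [] := by
  simp [row, show n + 1 - r = 0 by omega]

lemma row_sorted (r : ℕ) : (row m n r).Pairwise (· ≤ ·) := by
  refine List.pairwise_flatMap.mpr ⟨fun v _ => List.pairwise_replicate.mpr (Or.inr le_rfl), ?_⟩
  refine (List.pairwise_lt_range' (s := r) (n := n + 1 - r)).imp fun hvw x hx y hy => ?_
  rw [List.eq_of_mem_replicate hx, List.eq_of_mem_replicate hy]
  exact hvw.le

lemma countP_row (p : ℕ → Bool) (r : ℕ) :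
    (row m n r).countP p = ∑ v ∈ (Icc r n).filter (fun v => p v), m r v := by
  have hrange : (List.range' r (n + 1 - r)).toFinset = Icc r n := by
    ext v
    simp only [List.mem_toFinset, List.mem_range'_1, mem_Icc]
    omega
  rw [row, List.countP_flatMap, sum_filter, ← hrange, List.sum_toFinset _ List.nodup_range']
  simp [Function.comp_def, List.countP_replicate]

lemma count_row {r q : ℕ} (hrq : r ≤ q) (hq : q ≤ n) : (row m n r).count q = m r q := by
  rw [List.count_eq_countP, countP_row]
  convert sum_singleton (m r) q
  ext v
  simp only [mem_filter, mem_Icc, beq_iff_eq, mem_singleton]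
  omega

lemma count_reading {R q : ℕ} (hRq : R ≤ q) (hq : q ≤ n) :
    (reading m n R).count q = ∑ r ∈ Icc 1 R, m r q := by
  induction R with
  | zero => simp [reading]
  | succ R ih =>
    rw [reading, List.count_append, ih (by omega), sum_Icc_succ_top (by omega),
      count_row m n hRq hq, add_comm]

lemma reading_suffix {R R' : ℕ} (h : R ≤ R') : reading m n R <:+ reading m n R' := by
  induction R', h using Nat.le_induction with
  | base => exact List.suffix_refl _
  | succ R' _ ih => exact ih.trans (List.suffix_append _ _)

def rows : List (List ℕ) := (List.range' 1 n).map (row m n)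

lemma getD_rows (i : ℕ) : (rows m n).getD i [] = row m n (i + 1) := by
  rcases lt_or_ge i n with hi | hi
  · rw [rows, List.getD_eq_getElem _ _ (by simpa using hi), List.getElem_map,
      List.getElem_range', one_mul, add_comm]
  · rw [List.getD_eq_default _ _ (by simpa [rows] using hi), row_eq_nil m n (by omega)]

lemma flatten_reverse_rows : (rows m n).reverse.flatten = reading m n n := by
  suffices ∀ R, ((List.range' 1 R).map (row m n)).reverse.flatten = reading m n R from this n
  intro R
  induction R with
  | zero => rfl
  | succ R ih => simp [List.range'_concat, reading, ← ih, add_comm]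

def Interlacing : Prop :=
  ∀ r v, 1 ≤ r → (row m n (r + 1)).countP (· ≤ v) ≤ (row m n r).countP (· < v)

def tableau (hcol : Interlacing m n) : Tableau n where
  rows := rows m n
  entries_mem r hr x hx := by
    obtain ⟨v, hv, rfl⟩ := List.mem_map.mp hr
    have := mem_row hx
    rw [List.mem_range'_1] at hv
    rw [mem_Icc]
    omega
  row_weak r hr := by
    obtain ⟨v, -, rfl⟩ := List.mem_map.mp hr
    exact row_sorted m n v
  shape i := by
    have hle := hcol (i + 1) n (by omega)
    rw [List.countP_eq_length.mpr fun x hx => by simpa using (mem_row hx).2] at hle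
    rw [getD_rows, getD_rows]
    exact hle.trans List.countP_le_length
  col_strict i j hj := by
    rw [getD_rows] at hj ⊢
    rw [getD_rows]
    obtain ⟨hjL, hlt⟩ := List.getElem_lt_getElem_of_countP_le (row_sorted m n _)
      (row_sorted m n _) (hcol (i + 1) · (by omega)) hj
    rwa [List.getD_eq_getElem _ _ hjL, List.getD_eq_getElem _ _ hj]

lemma rowReading_tableau (hcol : Interlacing m n) :
    rowReading (tableau m n hcol) = reading m n n :=
  flatten_reverse_rows m n

end Rows

section Multiplicities

variable (X : ℕ → ℕ → ℕ)

/-- The number of letters `v` in rows `1, …, r` of the tableau realizing `X`. The recursion is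
forced by `X r r = cumMult X r r` and
`X r v - X r (v - 1) = cumMult X r v - cumMult X (r - 1) (v - 1)` (see `phi_self`). -/
def cumMult : ℕ → ℕ → ℤ
  | 0, _ => 0
  | r + 1, v => if v ≤ r + 1 then X (r + 1) (r + 1)
      else X (r + 1) v - X (r + 1) (v - 1) + cumMult r (v - 1)

def mult (r v : ℕ) : ℤ := cumMult X r v - cumMult X (r - 1) v

def rowSum (r a b : ℕ) : ℤ := ∑ v ∈ Icc a b, mult X r v

/-- The length of the nondecreasing subword made of the letters in `[a, q]` of row `r`
followed by all letters `q` of the rows below it. -/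
def phi (r a q : ℕ) : ℤ := rowSum X r a q + cumMult X (r - 1) q

@[simp] lemma cumMult_zero (v : ℕ) : cumMult X 0 v = 0 := rfl

lemma cumMult_self {r : ℕ} (hr : 1 ≤ r) : cumMult X r r = X r r := by
  obtain ⟨s, rfl⟩ : ∃ s, r = s + 1 := ⟨r - 1, by omega⟩
  simp [cumMult]

lemma cumMult_of_lt {r v : ℕ} (hr : 1 ≤ r) (hrv : r < v) :
    cumMult X r v = X r v - X r (v - 1) + cumMult X (r - 1) (v - 1) := by
  obtain ⟨s, rfl⟩ : ∃ s, r = s + 1 := ⟨r - 1, by omega⟩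
  simp [cumMult, show ¬v ≤ s + 1 by omega]

@[simp] lemma mult_zero (v : ℕ) : mult X 0 v = 0 := by simp [mult]

lemma cumMult_eq_sum_mult (r v : ℕ) : cumMult X r v = ∑ i ∈ Icc 1 r, mult X i v := by
  induction r with
  | zero => simp
  | succ r ih => rw [sum_Icc_succ_top (by omega), ← ih, mult, Nat.add_sub_cancel]; ring

lemma cumMult_self_succ (w : ℕ) :
    cumMult X w (w + 1) = ∑ i ∈ Icc 1 w, ((X i (i + 1) : ℤ) - X i i) := by
  induction w with
  | zero => simp
  | succ w ih =>
    rw [cumMult_of_lt X (by omega) (by omega), sum_Icc_succ_top (by omega), Nat.add_sub_cancel,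
      Nat.add_sub_cancel, ih]
    ring

lemma mult_one_succ {v : ℕ} (hv : 1 ≤ v) : mult X 1 (v + 1) = X 1 (v + 1) - X 1 v := by
  simp [mult, cumMult_of_lt X le_rfl (show 1 < v + 1 by omega)]

lemma mult_succ_succ {r v : ℕ} (hr : 1 ≤ r) (hrv : r < v) :
    mult X (r + 1) (v + 1) =
      ((X (r + 1) (v + 1) : ℤ) - X (r + 1) v - X r (v + 1) + X r v) + mult X r v := by
  rw [mult, mult, cumMult_of_lt X (by omega) (by omega), Nat.add_sub_cancel, Nat.add_sub_cancel,
    cumMult_of_lt X (v := v + 1) hr (by omega), Nat.add_sub_cancel]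
  ring

lemma mult_succ_self {w : ℕ} (hw : 1 ≤ w) :
    mult X (w + 1) (w + 1) = (X (w + 1) (w + 1) : ℤ) - X w (w + 1) + mult X w w := by
  rw [mult, mult, cumMult_self X (by omega), Nat.add_sub_cancel, cumMult_of_lt X hw (by omega),
    Nat.add_sub_cancel, cumMult_self X hw]
  ring

lemma phi_succ {r a q : ℕ} (haq : a ≤ q + 1) :
    phi X r a (q + 1) = rowSum X r a q + cumMult X r (q + 1) := by
  rcases Nat.eq_zero_or_pos r with rfl | hr
  · simp [phi, rowSum]
  · rw [phi, rowSum, sum_Icc_succ_top haq, mult, rowSum]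
    ring

lemma phi_self {p q : ℕ} (hp : 1 ≤ p) (hpq : p ≤ q) : phi X p p q = X p q := by
  induction q, hpq using Nat.le_induction with
  | base => simp [phi, rowSum, mult, cumMult_self X hp]
  | succ q hpq ih =>
    rw [phi_succ X (by omega), cumMult_of_lt X hp (by omega), Nat.add_sub_cancel, ← ih, phi]
    ring

def multNat (r v : ℕ) : ℕ := (mult X r v).toNat

end Multiplicities

section Realization

variable {n : ℕ} {X : ℕ → ℕ → ℕ}
  (hA : ∑ i ∈ Icc 1 (n - 1), X i (i + 1) ≤ ∑ i ∈ Icc 1 n, X i i)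
  (hB : ∀ i j, 1 ≤ i → i ≤ j → j < n → X i j ≤ X i (j + 1))
  (hC : ∀ i j, 1 < i → i ≤ j → j ≤ n → X i j ≤ X (i - 1) j)
  (hD : ∀ i j, 1 ≤ i → i < j → j < n →
    X i (j + 1) + X (i + 1) j ≤ X i j + X (i + 1) (j + 1))

include hB hD in
lemma mult_le_mult_succ_succ {r v : ℕ} (hrv : r < v) (hv : v < n) :
    mult X r v ≤ mult X (r + 1) (v + 1) := by
  rcases Nat.eq_zero_or_pos r with rfl | hr
  · have := hB 1 v le_rfl (by omega) hv
    rw [mult_zero, zero_add, mult_one_succ X (by omega)]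
    omega
  · have := hD r v hr hrv hv
    rw [mult_succ_succ X hr hrv]
    omega

include hA hC in
lemma mult_self_nonneg {v : ℕ} (hv : 1 ≤ v) (hvn : v ≤ n) : 0 ≤ mult X v v := by
  induction hvn using Nat.decreasingInduction with
  | self =>
    obtain ⟨m, rfl⟩ : ∃ m, n = m + 1 := ⟨n - 1, by omega⟩
    rw [Nat.add_sub_cancel, sum_Icc_succ_top (by omega)] at hA
    have hA' : (∑ i ∈ Icc 1 m, (X i (i + 1) : ℤ)) ≤
        ∑ i ∈ Icc 1 m, (X i i : ℤ) + X (m + 1) (m + 1) := by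
      exact_mod_cast hA
    rw [mult, cumMult_self X hv, Nat.add_sub_cancel, cumMult_self_succ, sum_sub_distrib]
    linarith
  | of_succ k hk ih =>
    have hX := hC (k + 1) (k + 1) (by omega) le_rfl hk
    rw [Nat.add_sub_cancel] at hX
    have := ih (by omega)
    rw [mult_succ_self X hv] at this
    omega

include hA hB hC hD in
lemma mult_nonneg {r v : ℕ} (hrv : r ≤ v) (hvn : v ≤ n) : 0 ≤ mult X r v := by
  induction r generalizing v with
  | zero => simp
  | succ r ih =>
    rcases hrv.eq_or_lt with rfl | hlt
    · exact mult_self_nonneg hA hC (by omega) hvn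
    · obtain ⟨w, rfl⟩ : ∃ w, v = w + 1 := ⟨v - 1, by omega⟩
      exact (ih (by omega) (by omega)).trans (mult_le_mult_succ_succ hB hD (by omega) (by omega))

include hB hD in
lemma rowSum_add_phi_le {r a b q : ℕ} (hr : 1 ≤ r) (hra : r ≤ a) (hab : a ≤ b)
    (hbq : b ≤ q) (hq : q ≤ n) : rowSum X r a b + phi X (r - 1) b q ≤ phi X r a q := by
  induction q, hbq using Nat.le_induction with
  | base => simp [phi, rowSum, mult]
  | succ q hbq ih =>
    have hstep := mult_le_mult_succ_succ hB hD (r := r - 1) (v := q) (by omega) (by omega)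
    rw [Nat.sub_add_cancel hr] at hstep
    rw [phi_succ X (by omega), phi_succ X (by omega)]
    simp only [phi, mult] at ih hstep
    linarith [ih (by omega)]

include hA hB hC hD in
lemma phi_mono {s s' a q : ℕ} (hss' : s ≤ s') (hs'a : s' ≤ a) (haq : a ≤ q) (hq : q ≤ n) :
    phi X s a q ≤ phi X s' a q := by
  induction s', hss' using Nat.le_induction with
  | base => exact le_rfl
  | succ s' hss' ih =>
    have hrow := rowSum_add_phi_le hB hD (r := s' + 1) (by omega) hs'a le_rfl haq hq
    have hmult := mult_nonneg hA hB hC hD hs'a (by omega : a ≤ n)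
    simp only [rowSum, Icc_self, sum_singleton, Nat.add_sub_cancel] at hrow
    linarith [ih (by omega)]

include hC in
lemma X_le_X_of_le {a r q : ℕ} (ha : 1 ≤ a) (har : a ≤ r) (hrq : r ≤ q) (hq : q ≤ n) :
    X r q ≤ X a q := by
  induction r, har using Nat.le_induction with
  | base => exact le_rfl
  | succ r har ih =>
    have := hC (r + 1) q (by omega) hrq hq
    simp only [Nat.add_sub_cancel] at this
    exact this.trans (ih (by omega))

include hB hC hD in
lemma rowSum_max_add_phi_min_le {r a b q : ℕ} (hr : 1 ≤ r) (ha : 1 ≤ a) (hab : a ≤ b)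
    (hbq : b ≤ q) (hq : q ≤ n) :
    rowSum X r (max a r) b + phi X (min (r - 1) b) b q ≤ phi X (min r a) a q := by
  rcases le_or_gt r a with hra | hra
  · rw [max_eq_left hra, min_eq_left (by omega), min_eq_left hra]
    exact rowSum_add_phi_le hB hD hr hra hab hbq hq
  rcases le_or_gt r b with hrb | hrb
  · rw [max_eq_right hra.le, min_eq_left (by omega), min_eq_right hra.le, phi_self X ha (by omega)]
    calc rowSum X r r b + phi X (r - 1) b q ≤ phi X r r q :=
          rowSum_add_phi_le hB hD hr le_rfl hrb hbq hq
      _ = X r q := phi_self X hr (by omega)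
      _ ≤ X a q := by exact_mod_cast X_le_X_of_le hC ha hra.le (by omega) hq
  · rw [max_eq_right hra.le, min_eq_right (by omega), min_eq_right hra.le, rowSum,
      Icc_eq_empty (by omega), sum_empty, zero_add, phi_self X (by omega) hbq,
      phi_self X ha (by omega)]
    exact_mod_cast X_le_X_of_le hC ha hab hbq hq

include hC in
lemma rowSum_succ_le {r v : ℕ} (hr : 1 ≤ r) (hrv : r < v) (hv : v ≤ n) :
    rowSum X (r + 1) (r + 1) v ≤ rowSum X r r (v - 1) := by
  have hsucc := phi_self X (p := r + 1) (by omega) hrv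
  have hself := phi_self X hr hrv.le
  have hX := hC (r + 1) v (by omega) hrv hv
  obtain ⟨w, rfl⟩ : ∃ w, v = w + 1 := ⟨v - 1, by omega⟩
  rw [phi_succ X (by omega)] at hself
  simp only [phi, Nat.add_sub_cancel] at hsucc hself hX ⊢
  omega

include hA hB hC hD in
lemma natCast_sum_multNat {r a b : ℕ} (hra : r ≤ a) (hb : b ≤ n) :
    ((∑ v ∈ Icc a b, multNat X r v : ℕ) : ℤ) = rowSum X r a b := by
  rw [Nat.cast_sum, rowSum]
  refine sum_congr rfl fun v hv => Int.toNat_of_nonneg (mult_nonneg hA hB hC hD ?_ ?_) <;>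
    grind

include hA hB hC hD in
lemma interlacing_multNat : Interlacing (multNat X) n := by
  intro r v hr
  have hsucc : (Icc (r + 1) n).filter (· ≤ v) = Icc (r + 1) (min v n) := by
    ext w; simp only [mem_filter, mem_Icc]; omega
  have hself : (Icc r n).filter (· < v) = Icc r (min (v - 1) n) := by
    ext w; simp only [mem_filter, mem_Icc]; omega
  rw [countP_row, countP_row]
  simp only [decide_eq_true_eq, hsucc, hself]
  rcases le_or_gt (min v n) r with hvr | hrv
  · rw [Icc_eq_empty (by omega), sum_empty]
    exact Nat.zero_le _
  have hmono : rowSum X r r (min v n - 1) ≤ rowSum X r r (min (v - 1) n) :=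
    sum_le_sum_of_subset_of_nonneg (Icc_subset_Icc_right (by omega)) fun w hw _ =>
      mult_nonneg hA hB hC hD (mem_Icc.mp hw).1 (by grind)
  have := rowSum_succ_le hC hr hrv (min_le_right _ _)
  rw [← Nat.cast_le (α := ℤ), natCast_sum_multNat hA hB hC hD le_rfl (min_le_right _ _),
    natCast_sum_multNat hA hB hC hD le_rfl (min_le_right _ _)]
  exact this.trans hmono

include hA hB hC hD in
lemma exists_sublist_reading_length_eq {p q : ℕ} (hp : 1 ≤ p) (hpq : p ≤ q) (hq : q ≤ n) :
    ∃ u : List ℕ, u.Sublist (reading (multNat X) n n) ∧ u.Pairwise (· ≤ ·) ∧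
      (∀ x ∈ u, x ∈ Icc p q) ∧ u.length = X p q := by
  obtain ⟨k, rfl⟩ : ∃ k, p = k + 1 := ⟨p - 1, by omega⟩
  set u₀ := (row (multNat X) n (k + 1)).filter (· ≤ q)
  set u₁ := List.replicate ((reading (multNat X) n k).count q) q
  have hmem₀ : ∀ x ∈ u₀, k + 1 ≤ x ∧ x ≤ q := fun x hx => by
    obtain ⟨hx, hxq⟩ := List.mem_filter.mp hx
    exact ⟨(mem_row hx).1, by simpa using hxq⟩
  have hmem₁ : ∀ x ∈ u₁, x = q := fun x hx => List.eq_of_mem_replicate hx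
  refine ⟨u₀ ++ u₁, ?_, ?_, ?_, ?_⟩
  · exact ((List.filter_sublist).append (List.replicate_sublist_iff.mpr le_rfl)).trans
      (reading_suffix _ _ (by omega : k + 1 ≤ n)).sublist
  · refine List.pairwise_append.mpr ⟨(row_sorted _ _ _).filter _,
      List.pairwise_replicate.mpr (Or.inr le_rfl), fun x hx y hy => ?_⟩
    rw [hmem₁ y hy]
    exact (hmem₀ x hx).2
  · intro x hx
    rcases List.mem_append.mp hx with hx | hx
    · exact mem_Icc.mpr (hmem₀ x hx)
    · rw [hmem₁ x hx]; exact mem_Icc.mpr ⟨hpq, le_rfl⟩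
  · have hfilter : (Icc (k + 1) n).filter (· ≤ q) = Icc (k + 1) q := by
      ext w; simp only [mem_filter, mem_Icc]; omega
    have hlen₀ : (u₀.length : ℤ) = rowSum X (k + 1) (k + 1) q := by
      rw [← List.countP_eq_length_filter, countP_row]
      simp only [decide_eq_true_eq, hfilter]
      exact natCast_sum_multNat hA hB hC hD le_rfl hq
    have hlen₁ : (u₁.length : ℤ) = cumMult X k q := by
      rw [List.length_replicate, count_reading _ _ (by omega) hq, Nat.cast_sum,
        cumMult_eq_sum_mult]
      refine sum_congr rfl fun r hr => Int.toNat_of_nonneg (mult_nonneg hA hB hC hD ?_ hq)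
      grind
    zify
    rw [List.length_append, Nat.cast_add, hlen₀, hlen₁, ← phi_self X hp hpq, phi,
      Nat.add_sub_cancel]

include hA hB hC hD in
lemma length_le_rowSum {r a b : ℕ} {u : List ℕ} (hb : b ≤ n)
    (hu : u.Sublist (row (multNat X) n r)) (hmem : ∀ x ∈ u, a ≤ x ∧ x ≤ b) :
    (u.length : ℤ) ≤ rowSum X r (max a r) b := by
  have hfilter : (Icc r n).filter (fun x => a ≤ x ∧ x ≤ b) = Icc (max a r) b := by
    ext w; simp only [mem_filter, mem_Icc]; omega
  have hcount := hu.countP_le (p := fun x => a ≤ x ∧ x ≤ b)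
  rw [List.countP_eq_length.mpr (by simpa using hmem), countP_row] at hcount
  simp only [decide_eq_true_eq, hfilter] at hcount
  rw [← natCast_sum_multNat hA hB hC hD (le_max_right a r) hb]
  exact_mod_cast hcount

include hA hB hC hD in
lemma length_le_phi {q : ℕ} (hq : q ≤ n) (R : ℕ) {a : ℕ} {u : List ℕ} (ha : 1 ≤ a)
    (haq : a ≤ q) (hu : u.Sublist (reading (multNat X) n R)) (hsorted : u.Pairwise (· ≤ ·))
    (hmem : ∀ x ∈ u, a ≤ x ∧ x ≤ q) : (u.length : ℤ) ≤ phi X (min R a) a q := by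
  induction R generalizing a u with
  | zero =>
    rw [List.sublist_nil.mp hu]
    simp [phi, rowSum]
  | succ R ih =>
    obtain ⟨u₀, u₁, rfl, hu₀, hu₁⟩ := List.sublist_append_iff.mp hu
    obtain ⟨hsorted₀, hsorted₁, hsorted₀₁⟩ := List.pairwise_append.mp hsorted
    rcases u₀.eq_nil_or_concat' with rfl | ⟨u₀, b, rfl⟩
    · rw [List.nil_append]
      exact (ih ha haq hu₁ hsorted₁ hmem).trans
        (phi_mono hA hB hC hD (by omega) (min_le_right _ _) haq hq)
    · have hb : b ∈ u₀ ++ [b] := List.mem_append_right _ List.mem_cons_self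
      obtain ⟨hab, hbq⟩ := hmem b (List.mem_append_left _ hb)
      have hle_b : ∀ x ∈ u₀ ++ [b], x ≤ b := by
        intro x hx
        rcases List.mem_append.mp hx with hx | hx
        · exact (List.pairwise_append.mp hsorted₀).2.2 x hx b List.mem_cons_self
        · rw [List.mem_singleton.mp hx]
      have hlen₀ := length_le_rowSum hA hB hC hD (by omega) hu₀ fun x hx =>
        ⟨(hmem x (List.mem_append_left _ hx)).1, hle_b x hx⟩
      have hlen₁ := ih (a := b) (by omega) hbq hu₁ hsorted₁ fun y hy =>
        ⟨hsorted₀₁ b hb y hy, (hmem y (List.mem_append_right _ hy)).2⟩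
      have hkey := rowSum_max_add_phi_min_le hB hC hD (r := R + 1) (by omega) ha hab hbq hq
      rw [Nat.add_sub_cancel] at hkey
      rw [List.length_append, Nat.cast_add]
      linarith

end Realization

end RhoTableau

/-- let `X` be an `n × n` upper triangular matrix with nonnegative
integer entries on and above the diagonal (recorded here as `X : ℕ → ℕ → ℕ`,
1-indexed) satisfying conditions (A)–(D). Then `X = ρ(T)` for some semistandard
tableau `T` over `{1,…,n}`, where `ρ(T)_{p,q}` is the maximum length of a weakly
non-decreasing scattered subword of the word of `T` with letters in `{p,…,q}`. -/
theorem stmt16 (n : ℕ) (X : ℕ → ℕ → ℕ)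
    (hA : ∑ i ∈ Finset.Icc 1 (n - 1), X i (i + 1) ≤ ∑ i ∈ Finset.Icc 1 n, X i i)
    (hB : ∀ i j, 1 ≤ i → i ≤ j → j < n → X i j ≤ X i (j + 1))
    (hC : ∀ i j, 1 < i → i ≤ j → j ≤ n → X i j ≤ X (i - 1) j)
    (hD : ∀ i j, 1 ≤ i → i < j → j < n →
      X i (j + 1) + X (i + 1) j ≤ X i j + X (i + 1) (j + 1)) :
    ∃ T : Tableau n, ∀ p q, 1 ≤ p → p ≤ q → q ≤ n →
      (∃ u : List ℕ, u.Sublist (rowReading T) ∧ List.Pairwise (· ≤ ·) u ∧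
          (∀ x ∈ u, x ∈ Finset.Icc p q) ∧ u.length = X p q) ∧
      (∀ u : List ℕ, u.Sublist (rowReading T) → List.Pairwise (· ≤ ·) u →
          (∀ x ∈ u, x ∈ Finset.Icc p q) → u.length ≤ X p q) := by
  refine ⟨RhoTableau.tableau (RhoTableau.multNat X) n
    (RhoTableau.interlacing_multNat hA hB hC hD), fun p q hp hpq hq => ⟨?_, ?_⟩⟩
  · rw [RhoTableau.rowReading_tableau]
    exact RhoTableau.exists_sublist_reading_length_eq hA hB hC hD hp hpq hq
  · intro u hu hsorted hmem
    rw [RhoTableau.rowReading_tableau] at hu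
    have hlen := RhoTableau.length_le_phi hA hB hC hD hq n hp hpq hu hsorted fun x hx =>
      mem_Icc.mp (hmem x hx)
    rwa [min_eq_right (by omega), RhoTableau.phi_self X hp hpq, Nat.cast_le] at hlen
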